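/- Almost-sure convergence of the local construction: for almost every ω (under supercritical oriented percolation, where every site off the backbone has a finite longest-open-path length) and every ω̃, the limit γ_∞^{(x,n)}(j) = lim_{k→∞} γ_k^{(x,n)}(j) exists for every j ≥ 0, and γ_∞^{(x,n)}(j) ∈ C for all j. -/

import Mathlib

/-- A space-time site of `ℤ^d × ℤ`. -/
abbrev Site (d : ℕ) := (Fin d → ℤ) × ℤ

/-- The neighbourhood `U(x,n) = {(y,n+1) : ‖x − y‖_∞ ≤ 1}` of a site in the next generation. -/
def nbhd {d : ℕ} (p : Site d) : Set (Site d) :=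
  {q | q.2 = p.2 + 1 ∧ ∀ i, |p.1 i - q.1 i| ≤ 1}

/-- There is a directed open path of length `k` starting at `p` (all `k+1` sites on it open). -/
def hasOpenPath {d : ℕ} (ω : Site d → Bool) (p : Site d) (k : ℕ) : Prop :=
  ∃ γ : ℕ → (Fin d → ℤ), γ 0 = p.1 ∧
    (∀ j < k, ∀ i, |γ (j + 1) i - γ j i| ≤ 1) ∧
    (∀ j ≤ k, ω (γ j, p.2 + (j : ℤ)) = true)

/-- `ellSucc ω p` is `ℓ(p) + 1`, where `ℓ(p)` is the length of the longest directed open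
path starting at `p` (with `ℓ(p) = −1`, i.e. `ellSucc ω p = 0`, at closed sites, and
`ℓ(p) = ∞` on the backbone).  Shifting by one lets us work in `ℕ∞` instead of `{−1} ∪ ℕ∞`. -/
noncomputable def ellSucc {d : ℕ} (ω : Site d → Bool) (p : Site d) : ℕ∞ :=
  sSup {t : ℕ∞ | ∃ k : ℕ, t = (k : ℕ∞) + 1 ∧ hasOpenPath ω p k}

/-- The backbone `C` of the oriented percolation cluster: sites where `ℓ = ∞`. -/
def backbone {d : ℕ} (ω : Site d → Bool) : Set (Site d) := {p | ellSucc ω p = ⊤}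

/-- `maximizers ω (k+1) p` is the set `M_k(p)` of maximisers over `U(p)` of the truncated
length `ℓ_k = ℓ ∧ k` (in the shifted encoding: of `min (ℓ + 1) (k + 1)`), and
`maximizers ω 0 p = M_{−1}(p) = U(p)`. -/
noncomputable def maximizers {d : ℕ} (ω : Site d → Bool) : ℕ → Site d → Set (Site d)
  | 0, p => nbhd p
  | k + 1, p =>
      {q ∈ nbhd p |
        min (ellSucc ω q) ((k : ℕ∞) + 1) =
          sSup ((fun r => min (ellSucc ω r) ((k : ℕ∞) + 1)) '' nbhd p)}

/-- `sel` is a valid local-selection rule for the random permutations encoded by the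
rank function `rank`: `rank p` enumerates the neighbourhood `U(p)` injectively (this is
the permutation `ω̃(p)`), and `sel k p` is the element of `maximizers ω k p`
(i.e. of `M_{k-1}(p)`, with `sel 0 p ∈ M_{−1}(p) = U(p)`) appearing first in this
permutation. -/
def IsSelection {d : ℕ} (ω : Site d → Bool) (rank : Site d → Site d → ℕ)
    (sel : ℕ → Site d → Site d) : Prop :=
  (∀ p : Site d, Set.InjOn (rank p) (nbhd p)) ∧
    ∀ (k : ℕ) (p : Site d),
      sel k p ∈ maximizers ω k p ∧ ∀ q ∈ maximizers ω k p, rank p (sel k p) ≤ rank p q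

/-- The locally constructed path `γ_k^{(x,n)}` of length `k` started at `p = (x,n)`:
`γ_k(0) = p` and `γ_k(j+1) = m_{k−j−2}(γ_k(j))`, where `m_i` is the first element of
`M_i` in the permutation (in the shifted indexing, `γ_k(j+1) = sel (k−j−1) (γ_k(j))`). -/
def gammaPath {d : ℕ} (sel : ℕ → Site d → Site d) (p : Site d) (k : ℕ) : ℕ → Site d
  | 0 => p
  | j + 1 => sel (k - j - 1) (gammaPath sel p k j)

/-!
Since `U(p)` is finite and every site off `C` has finite `ℓ`, the sites of `U(p) \ C` have
`ℓ` bounded by some `N`. A site `p ∈ C` has open paths of every length, so it has a neighbour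
with `ℓ > N`, i.e. `U(p) ∩ C ≠ ∅`. Hence for `k ≥ N` the truncated length `ℓ ∧ k` is
maximised over `U(p)` exactly on `U(p) ∩ C`: the maximiser sets `M_k(p)` no longer depend on
`k`, and neither does their first element in the permutation `ω̃(p)`, which lies in `C`.
Induction along the path then shows that each `γ_k(j)` is eventually constant in `k` and in `C`.
-/

variable {d : ℕ}

lemma nbhd_finite (p : Site d) : (nbhd p).Finite := by
  refine ((Set.Finite.pi fun i => Set.finite_Icc (p.1 i - 1) (p.1 i + 1)).prod
    (Set.finite_singleton (p.2 + 1))).subset ?_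
  rintro ⟨y, m⟩ ⟨hm, hy⟩
  refine ⟨fun i _ => ?_, hm⟩
  have := abs_le.mp (hy i)
  constructor <;> linarith [this.1, this.2]

lemma hasOpenPath.mono {ω : Site d → Bool} {p : Site d} {k j : ℕ} (h : hasOpenPath ω p k)
    (hjk : j ≤ k) : hasOpenPath ω p j := by
  obtain ⟨γ, h0, hstep, hopen⟩ := h
  exact ⟨γ, h0, fun i hi => hstep i (by omega), fun i hi => hopen i (by omega)⟩

lemma hasOpenPath.exists_nbhd {ω : Site d → Bool} {p : Site d} {k : ℕ}
    (h : hasOpenPath ω p (k + 1)) : ∃ q ∈ nbhd p, hasOpenPath ω q k := by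
  obtain ⟨γ, h0, hstep, hopen⟩ := h
  refine ⟨(γ 1, p.2 + 1), ⟨rfl, fun i => ?_⟩, fun j => γ (j + 1), rfl,
    fun j hj => hstep (j + 1) (by omega), fun j hj => ?_⟩
  · simpa [h0, abs_sub_comm] using hstep 0 (by omega) i
  · have hshift : p.2 + 1 + (j : ℤ) = p.2 + ((j + 1 : ℕ) : ℤ) := by push_cast; ring
    simpa [hshift] using hopen (j + 1) (by omega)

lemma hasOpenPath.le_ellSucc {ω : Site d → Bool} {p : Site d} {k : ℕ}
    (h : hasOpenPath ω p k) : (k : ℕ∞) + 1 ≤ ellSucc ω p :=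
  le_sSup ⟨k, rfl, h⟩

lemma hasOpenPath_of_mem_backbone {ω : Site d → Bool} {p : Site d} (hp : p ∈ backbone ω)
    (k : ℕ) : hasOpenPath ω p k := by
  obtain ⟨_, ⟨k', rfl, hpath⟩, hlt⟩ := sSup_eq_top.mp hp k (ENat.natCast_lt_top k)
  have hkk' : k < k' + 1 := by exact_mod_cast hlt
  exact hpath.mono (Nat.lt_succ_iff.mp hkk')

lemma exists_ellSucc_le_on_nbhd_diff_backbone {ω : Site d → Bool}
    (hfin : ∀ q : Site d, q ∉ backbone ω → ∃ L : ℕ, ellSucc ω q = (L : ℕ∞)) (p : Site d) :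
    ∃ N : ℕ, ∀ q ∈ nbhd p, q ∉ backbone ω → ellSucc ω q ≤ N := by
  obtain ⟨N, hN⟩ := (((nbhd_finite p).sdiff (t := backbone ω)).image
    fun q => (ellSucc ω q).toNat).exists_le
  refine ⟨N, fun q hq hqC => ?_⟩
  obtain ⟨L, hL⟩ := hfin q hqC
  have hLN : L ≤ N := by simpa [hL] using hN _ ⟨q, ⟨hq, hqC⟩, rfl⟩
  rw [hL]
  exact_mod_cast hLN

lemma maximizers_subset_nbhd (ω : Site d → Bool) (k : ℕ) (p : Site d) :
    maximizers ω k p ⊆ nbhd p := by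
  cases k
  · exact subset_rfl
  · exact Set.sep_subset _ _

section BoundedOffBackbone

variable {ω : Site d → Bool} {p : Site d} {N : ℕ}

lemma exists_nbhd_mem_backbone (hN : ∀ q ∈ nbhd p, q ∉ backbone ω → ellSucc ω q ≤ N)
    (hp : p ∈ backbone ω) : ∃ q ∈ nbhd p, q ∈ backbone ω := by
  obtain ⟨q, hq, hpath⟩ := (hasOpenPath_of_mem_backbone hp (N + 1)).exists_nbhd
  refine ⟨q, hq, by_contra fun hqC => ?_⟩
  have := hpath.le_ellSucc.trans (hN q hq hqC)
  norm_cast at this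
  omega

lemma min_ellSucc_eq_iff_mem_backbone
    (hN : ∀ q ∈ nbhd p, q ∉ backbone ω → ellSucc ω q ≤ N) {k : ℕ} (hk : N ≤ k) {q : Site d}
    (hq : q ∈ nbhd p) :
    min (ellSucc ω q) ((k : ℕ∞) + 1) = (k : ℕ∞) + 1 ↔ q ∈ backbone ω := by
  refine ⟨fun h => ?_, fun hqC => by simp [show ellSucc ω q = ⊤ from hqC]⟩
  by_contra hqC
  have : (k : ℕ∞) + 1 ≤ N := h ▸ (min_le_left _ _).trans (hN q hq hqC)
  exact absurd this (by norm_cast; omega)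

lemma maximizers_eq_nbhd_inter_backbone
    (hN : ∀ q ∈ nbhd p, q ∉ backbone ω → ellSucc ω q ≤ N) (hp : p ∈ backbone ω) {k : ℕ}
    (hk : N ≤ k) :
    maximizers ω (k + 1) p = nbhd p ∩ backbone ω := by
  have hsup : sSup ((fun r => min (ellSucc ω r) ((k : ℕ∞) + 1)) '' nbhd p) = (k : ℕ∞) + 1 := by
    refine le_antisymm (sSup_le ?_) ?_
    · rintro _ ⟨r, -, rfl⟩
      exact min_le_right _ _
    · obtain ⟨q, hq, hqC⟩ := exists_nbhd_mem_backbone hN hp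
      exact le_sSup ⟨q, hq, (min_ellSucc_eq_iff_mem_backbone hN hk hq).mpr hqC⟩
  ext q
  simp only [maximizers, Set.mem_sep_iff, Set.mem_inter_iff, hsup]
  exact and_congr_right (min_ellSucc_eq_iff_mem_backbone hN hk)

end BoundedOffBackbone

namespace IsSelection

variable {ω : Site d → Bool} {rank : Site d → Site d → ℕ} {sel : ℕ → Site d → Site d}

lemma sel_eq_of_maximizers_eq (hsel : IsSelection ω rank sel) {p : Site d} {k m : ℕ}
    (h : maximizers ω k p = maximizers ω m p) : sel k p = sel m p := by
  obtain ⟨hk, hk_min⟩ := hsel.2 k p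
  obtain ⟨hm, hm_min⟩ := hsel.2 m p
  rw [h] at hk hk_min
  exact hsel.1 p (maximizers_subset_nbhd ω m p hk) (maximizers_subset_nbhd ω m p hm)
    ((hk_min _ hm).antisymm (hm_min _ hk))

lemma exists_sel_eventually_eq (hsel : IsSelection ω rank sel)
    (hfin : ∀ q : Site d, q ∉ backbone ω → ∃ L : ℕ, ellSucc ω q = (L : ℕ∞))
    {p : Site d} (hp : p ∈ backbone ω) :
    ∃ q ∈ backbone ω, ∃ K : ℕ, ∀ m, K ≤ m → sel m p = q := by
  obtain ⟨N, hN⟩ := exists_ellSucc_le_on_nbhd_diff_backbone hfin p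
  have hmax : ∀ m, N + 1 ≤ m → maximizers ω m p = nbhd p ∩ backbone ω := fun m hm => by
    obtain ⟨k, rfl⟩ : ∃ k, m = k + 1 := ⟨m - 1, by omega⟩
    exact maximizers_eq_nbhd_inter_backbone hN hp (by omega)
  refine ⟨sel (N + 1) p, ?_, N + 1, fun m hm => ?_⟩
  · have hmem := (hsel.2 (N + 1) p).1
    rw [hmax (N + 1) le_rfl] at hmem
    exact hmem.2
  · exact hsel.sel_eq_of_maximizers_eq ((hmax m hm).trans (hmax (N + 1) le_rfl).symm)

end IsSelection

/-- Convergence of the local construction (for any realization `ω` such that every site off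
the backbone `C` has a finite longest-open-path length, which holds a.s. under supercritical
oriented percolation, and every realization of the permutations): started from `p ∈ C`,
the limit `γ_∞^{(x,n)}(j) = lim_{k→∞} γ_k^{(x,n)}(j)` exists for every `j ≥ 0`, i.e. the
value `γ_k(j)` is eventually constant in `k`, and the limit lies on `C`. -/
theorem gammaPath_limit_exists (d : ℕ) (ω : Site d → Bool)
    (rank : Site d → Site d → ℕ) (sel : ℕ → Site d → Site d)
    (hsel : IsSelection ω rank sel)
    (hfin : ∀ q : Site d, q ∉ backbone ω → ∃ L : ℕ, ellSucc ω q = (L : ℕ∞))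
    (p : Site d) (hp : p ∈ backbone ω) :
    ∀ j : ℕ, ∃ q ∈ backbone ω, ∃ K : ℕ, ∀ k, K ≤ k → gammaPath sel p k j = q := by
  intro j
  induction j with
  | zero => exact ⟨p, hp, 0, fun _ _ => rfl⟩
  | succ j ih =>
    obtain ⟨q, hq, K, hK⟩ := ih
    obtain ⟨q', hq', K', hK'⟩ := hsel.exists_sel_eventually_eq hfin hq
    refine ⟨q', hq', max K (K' + j + 1), fun k hk => ?_⟩
    show sel (k - j - 1) (gammaPath sel p k j) = q'
    rw [hK k (le_of_max_le_left hk)]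
    exact hK' _ (by omega)
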